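/- If the map α: X → X is invertible, its inverse α^{−1} is measurable, and the measure m is α-invariant, then τ(μ) = 0 for every μ ∈ M(X,m). -/

import Mathlib

open MeasureTheory Filter Topology
open scoped Classical ENNReal NNReal

noncomputable section

namespace TEntropyPaper

variable {X : Type*} [MeasurableSpace X]

/-- The mapping `α` is measurable and the shift operator `A f = f ∘ α` is bounded on
`L¹(X, m)`; equivalently `m (α⁻¹ G) ≤ C · m G` for all measurable `G`. -/
def ShiftBounded (m : Measure X) (α : X → X) : Prop :=
  Measurable α ∧ ∃ C : ℝ≥0, ∀ s : Set X, MeasurableSet s → m (α ⁻¹' s) ≤ (C : ℝ≥0∞) * m s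

/-- A positive normalized linear functional on `L^∞(X, m)`, encoded as a real-valued
map on functions `X → ℝ` which is linear and positive on essentially bounded
(strongly) measurable functions, respects `m`-a.e. equality, takes the value `1` at the
constant function `1` and (as a normalization) vanishes on functions not in `L^∞`. -/
structure PosFunctional (m : Measure X) where
  toFun : (X → ℝ) → ℝ
  map_add' : ∀ f g : X → ℝ, MemLp f ⊤ m → MemLp g ⊤ m → toFun (f + g) = toFun f + toFun g
  map_smul' : ∀ (c : ℝ) (f : X → ℝ), MemLp f ⊤ m → toFun (c • f) = c * toFun f
  nonneg' : ∀ f : X → ℝ, MemLp f ⊤ m → (0 : X → ℝ) ≤ᵐ[m] f → 0 ≤ toFun f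
  map_one' : toFun (fun _ => 1) = 1
  congr_ae' : ∀ f g : X → ℝ, MemLp f ⊤ m → MemLp g ⊤ m → f =ᵐ[m] g → toFun f = toFun g
  zero_of_ne' : ∀ f : X → ℝ, ¬ MemLp f ⊤ m → toFun f = 0

/-- Evaluation of a functional in `M(X,m)` against the `L^∞` test functions. -/
def evalMap (m : Measure X) (μ : PosFunctional m) : {f : X → ℝ // MemLp f ⊤ m} → ℝ :=
  fun f => μ.toFun f.1

/-- The weak-* topology on `M(X,m)`: the topology of pointwise convergence on `L^∞`
test functions. -/
instance (m : Measure X) : TopologicalSpace (PosFunctional m) :=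
  TopologicalSpace.induced (evalMap m) inferInstance

/-- `α`-invariance of a functional `μ ∈ M(X,m)`: `μ(f ∘ α) = μ(f)`. -/
def PosFunctional.Invariant (α : X → X) {m : Measure X} (μ : PosFunctional m) : Prop :=
  ∀ f : X → ℝ, MemLp f ⊤ m → μ.toFun (f ∘ α) = μ.toFun f

/-- A measurable partition of unity on `X`: a finite set of nonnegative functions in
`L^∞(X,m)` summing to `1` almost everywhere. -/
def IsPartUnity (m : Measure X) (D : Finset (X → ℝ)) : Prop :=
  (∀ g ∈ D, MemLp g ⊤ m ∧ (0 : X → ℝ) ≤ᵐ[m] g) ∧ ∀ᵐ x ∂m, ∑ g ∈ D, g x = 1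

/-- Birkhoff sum `S_n φ = φ + φ∘α + ⋯ + φ∘α^{n-1}`. -/
def birkhoff (α : X → X) (φ : X → ℝ) (n : ℕ) (x : X) : ℝ :=
  ∑ i ∈ Finset.range n, φ (α^[i] x)

/-- The unit sphere of `L¹(X,m)`. -/
def UnitL1 (m : Measure X) : Set (X → ℝ) := {f | Integrable f m ∧ ∫ x, |f x| ∂m = 1}

/-- The integral `∫_X g · |f ∘ αⁿ| dm`. -/
def wInt (m : Measure X) (α : X → X) (n : ℕ) (g f : X → ℝ) : ℝ :=
  ∫ x, g x * |f (α^[n] x)| ∂m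

/-- The summand `w · ln((∫_X g·|f∘αⁿ| dm)/w)` in the definition of `t`-entropy,
with values in `EReal`: it is `0` when `w = 0` and `-∞` when the integral vanishes
while `w ≠ 0`. -/
def tauTermR (m : Measure X) (α : X → X) (n : ℕ) (w : ℝ) (f g : X → ℝ) : EReal :=
  if w = 0 then 0
  else if wInt m α n g f = 0 then ⊥
  else ((w * Real.log (wInt m α n g f / w) : ℝ) : EReal)

/-- `τ_n(w, D)` for an abstract weight function `w` on the elements of `D`. -/
def tauNDW (m : Measure X) (α : X → X) (n : ℕ) (D : Finset (X → ℝ))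
    (w : (X → ℝ) → ℝ) : EReal :=
  if ∃ g ∈ D, (∫⁻ x, ENNReal.ofReal (g x) ∂m) = 0 ∧ 0 < w g then ⊥
  else ⨆ f ∈ UnitL1 m, ∑ g ∈ D, tauTermR m α n (w g) f g

/-- `τ_n(μ, D)` for `μ ∈ M(X,m)` and a measurable partition of unity `D`. -/
def tauND (m : Measure X) (α : X → X) (μ : PosFunctional m) (n : ℕ)
    (D : Finset (X → ℝ)) : EReal :=
  tauNDW m α n D (fun g => μ.toFun g)

/-- `τ_n(μ) = inf_D τ_n(μ, D)` over all measurable partitions of unity `D`. -/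
def tauN (m : Measure X) (α : X → X) (μ : PosFunctional m) (n : ℕ) : EReal :=
  ⨅ D ∈ {D : Finset (X → ℝ) | IsPartUnity m D}, tauND m α μ n D

/-- The `t`-entropy `τ(μ) = inf_{n ≥ 1} τ_n(μ)/n`. -/
def tEntropy (m : Measure X) (α : X → X) (μ : PosFunctional m) : EReal :=
  ⨅ n : {k : ℕ // 0 < k}, ((((n : ℕ) : ℝ)⁻¹ : ℝ) : EReal) * tauN m α μ (n : ℕ)

/-- The operator norm `‖A_φⁿ‖` of the `n`-th power of the weighted shift operator
`A_φ f = e^φ · (f ∘ α)` on `L¹(X,m)`, i.e. the supremum of `∫ e^{S_nφ}|f∘αⁿ| dm`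
over the unit sphere of `L¹`. -/
def weightedOpNorm (m : Measure X) (α : X → X) (φ : X → ℝ) (n : ℕ) : ℝ :=
  sSup {r : ℝ | ∃ f ∈ UnitL1 m,
    r = ∫ x, Real.exp (birkhoff α φ n x) * |f (α^[n] x)| ∂m}

/-- `D_m`: the elements of `D` which are not `m`-a.e. zero (i.e. `∫ g dm > 0`). -/
def Dm (m : Measure X) (D : Finset (X → ℝ)) : Finset (X → ℝ) :=
  D.filter (fun g => (∫⁻ x, ENNReal.ofReal (g x) ∂m) ≠ 0)

/-- The simplex `M(D)` of probability measures on the finite set `D`, realized as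
weight functions vanishing outside `D`. -/
def MD (D : Finset (X → ℝ)) : Set ((X → ℝ) → ℝ) :=
  {w | (∀ g ∈ D, 0 ≤ w g) ∧ (∑ g ∈ D, w g) = 1 ∧ ∀ g ∉ D, w g = 0}

/-- The sum `Σ_{g ∈ D_m} w(g)·ln((∫ g·|f∘αⁿ| dm)/w(g))`. -/
def tauSumDm (m : Measure X) (α : X → X) (n : ℕ) (D : Finset (X → ℝ))
    (w : (X → ℝ) → ℝ) (f : X → ℝ) : EReal :=
  ∑ g ∈ Dm m D, tauTermR m α n (w g) f g

/-- `τ_n(w, D)` with the sum restricted to `D_m`, for `w ∈ M(D_m)`. -/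
def tauDm (m : Measure X) (α : X → X) (n : ℕ) (D : Finset (X → ℝ))
    (w : (X → ℝ) → ℝ) : EReal :=
  ⨆ f ∈ UnitL1 m, tauSumDm m α n D w f

/-- `w'` is an optimizing limit for `(w, n, D)`: there is a sequence of nonnegative
unit-norm `f_i ∈ L¹(X,m)` along which the supremum defining `τ_n(w,D)` is attained in
the limit and `w'(g) = lim_i ∫ g·(f_i∘αⁿ) dm` for each `g ∈ D_m`. -/
def IsOptLimit (m : Measure X) (α : X → X) (n : ℕ) (D : Finset (X → ℝ))
    (w w' : (X → ℝ) → ℝ) : Prop :=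
  ∃ F : ℕ → (X → ℝ),
    (∀ i, F i ∈ UnitL1 m ∧ (0 : X → ℝ) ≤ᵐ[m] F i) ∧
    (∀ g ∈ Dm m D, Tendsto (fun i => wInt m α n g (F i)) atTop (𝓝 (w' g))) ∧
    Tendsto (fun i => tauSumDm m α n D w (F i)) atTop (𝓝 (tauDm m α n D w))

/-! The trivial partition `{1}` gives `τ_n(μ, {1}) = 0`, because `m` is `α`-invariant and so
`∫ |f ∘ αⁿ| dm = ‖f‖₁ = 1`. Conversely, for any partition `D` each summand is close to
`μ(g) ln 1 = 0` once `∫ g·|f∘αⁿ| dm ≈ μ(g)` for all `g ∈ D`. Such an `f` exists: by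
Hahn–Banach the probability densities `ρ` are weak-* dense in `M(X,m)`, so `∫ g ρ dm ≈ μ(g)`
for some `ρ`, and `f = ρ ∘ βⁿ` undoes the shift since `β` is a left inverse of `α`. -/

theorem _root_.EReal.coe_finset_sum {ι : Type*} (s : Finset ι) (a : ι → ℝ) :
    ((∑ i ∈ s, a i : ℝ) : EReal) = ∑ i ∈ s, (a i : EReal) :=
  map_sum (⟨⟨Real.toEReal, EReal.coe_zero⟩, EReal.coe_add⟩ : ℝ →+ EReal) a s

section MeasurePreserving

variable {Y Z : Type*} [MeasurableSpace Y] [MeasurableSpace Z] {μ : Measure Y} {ν : Measure Z}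

theorem _root_.MeasureTheory.MeasurePreserving.of_leftInverse {α : Y → Z} {β : Z → Y}
    (hα : MeasurePreserving α μ ν) (hβ : Measurable β) (hβα : Function.LeftInverse β α) :
    MeasurePreserving β ν μ := by
  refine ⟨hβ, ?_⟩
  rw [← hα.map_eq, Measure.map_map hβ hα.measurable, hβα.comp_eq_id, Measure.map_id]

theorem _root_.MeasureTheory.MeasurePreserving.integral_comp_of_aestronglyMeasurable
    {E : Type*} [NormedAddCommGroup E] [NormedSpace ℝ E] {φ : Y → Z}
    (hφ : MeasurePreserving φ μ ν) {F : Z → E} (hF : AEStronglyMeasurable F ν) :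
    ∫ y, F (φ y) ∂μ = ∫ z, F z ∂ν := by
  rw [← integral_map hφ.aemeasurable (by rwa [hφ.map_eq]), hφ.map_eq]

end MeasurePreserving

theorem integral_abs_comp_of_mem_unitL1 {m : Measure X} {φ : X → X}
    (hφ : MeasurePreserving φ m m) {f : X → ℝ} (hf : f ∈ UnitL1 m) :
    ∫ x, |f (φ x)| ∂m = 1 :=
  (hφ.integral_comp_of_aestronglyMeasurable hf.1.1.norm).trans hf.2

structure IsProbDensity (m : Measure X) (ρ : X → ℝ) : Prop where
  nonneg : ∀ x, 0 ≤ ρ x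
  integrable : Integrable ρ m
  integral_eq_one : ∫ x, ρ x ∂m = 1

namespace IsProbDensity

variable {m : Measure X} {ρ : X → ℝ}

theorem mem_unitL1 (hρ : IsProbDensity m ρ) : ρ ∈ UnitL1 m := by
  refine ⟨hρ.integrable, ?_⟩
  simpa only [abs_of_nonneg (hρ.nonneg _)] using hρ.integral_eq_one

theorem comp {Y : Type*} [MeasurableSpace Y] {ν : Measure Y} {φ : Y → X}
    (hρ : IsProbDensity m ρ) (hφ : MeasurePreserving φ ν m) : IsProbDensity ν (ρ ∘ φ) where
  nonneg x := hρ.nonneg (φ x)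
  integrable := (hφ.integrable_comp hρ.integrable.1).2 hρ.integrable
  integral_eq_one :=
    (hφ.integral_comp_of_aestronglyMeasurable hρ.integrable.1).trans hρ.integral_eq_one

theorem convex_comb {ρ' : X → ℝ} (hρ : IsProbDensity m ρ) (hρ' : IsProbDensity m ρ')
    {a b : ℝ} (ha : 0 ≤ a) (hb : 0 ≤ b) (hab : a + b = 1) :
    IsProbDensity m (a • ρ + b • ρ') where
  nonneg x := add_nonneg (mul_nonneg ha (hρ.nonneg x)) (mul_nonneg hb (hρ'.nonneg x))
  integrable := (hρ.integrable.smul a).add (hρ'.integrable.smul b)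
  integral_eq_one := by
    simp only [Pi.add_apply, Pi.smul_apply, smul_eq_mul]
    rw [integral_add (hρ.integrable.const_mul a) (hρ'.integrable.const_mul b),
      integral_const_mul, integral_const_mul, hρ.integral_eq_one, hρ'.integral_eq_one, mul_one,
      mul_one, hab]

end IsProbDensity

theorem exists_isProbDensity_of_measure_pos {m : Measure X} [SigmaFinite m] {A : Set X}
    (hA : MeasurableSet A) (hpos : 0 < m A) :
    ∃ ρ, IsProbDensity m ρ ∧ ∀ x ∉ A, ρ x = 0 := by
  obtain ⟨B, hB, hBA, hB0, hBtop⟩ := Measure.exists_subset_measure_lt_top hA hpos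
  have hBreal : m.real B ≠ 0 := ENNReal.toReal_ne_zero.2 ⟨hB0.ne', hBtop.ne⟩
  refine ⟨B.indicator fun _ => (m.real B)⁻¹, ⟨fun x => ?_, ?_, ?_⟩, fun x hx => ?_⟩
  · exact Set.indicator_nonneg (fun _ _ => inv_nonneg.2 measureReal_nonneg) x
  · exact (integrable_indicator_iff hB).2 (integrableOn_const hBtop.ne)
  · rw [integral_indicator_const _ hB, smul_eq_mul, mul_inv_cancel₀ hBreal]
  · exact Set.indicator_of_notMem (fun hxB => hx (hBA hxB)) _

theorem ae_le_of_forall_isProbDensity {m : Measure X} [SigmaFinite m] {h : X → ℝ} {u : ℝ}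
    (hh : MemLp h ⊤ m) (hu : ∀ ρ, IsProbDensity m ρ → ∫ x, h x * ρ x ∂m < u) :
    h ≤ᵐ[m] fun _ => u := by
  by_contra hcon
  set h' := hh.aestronglyMeasurable.mk h
  have hhh' : h =ᵐ[m] h' := hh.aestronglyMeasurable.ae_eq_mk
  set A := {x | u < h' x}
  have hA : MeasurableSet A :=
    measurableSet_lt measurable_const hh.aestronglyMeasurable.stronglyMeasurable_mk.measurable
  have hpos : 0 < m A := by
    refine pos_iff_ne_zero.2 fun hA0 => hcon ?_
    filter_upwards [measure_eq_zero_iff_ae_notMem.1 hA0, hhh'] with x hx hx'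
    exact hx' ▸ not_lt.1 hx
  obtain ⟨ρ, hρ, hρA⟩ := exists_isProbDensity_of_measure_pos hA hpos
  refine (hu ρ hρ).not_ge ?_
  calc u = ∫ x, u * ρ x ∂m := by rw [integral_const_mul, hρ.integral_eq_one, mul_one]
    _ ≤ ∫ x, h x * ρ x ∂m := by
      refine integral_mono_ae (hρ.integrable.const_mul u) (hρ.integrable.mul_of_top_right hh) ?_
      filter_upwards [hhh'] with x hx
      by_cases hxA : x ∈ A
      · exact mul_le_mul_of_nonneg_right (hx ▸ hxA.le) (hρ.nonneg x)
      · simp [hρA x hxA]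

def densityMoments (m : Measure X) {ι : Type*} (g : ι → X → ℝ) : Set (ι → ℝ) :=
  (fun ρ i => ∫ x, g i x * ρ x ∂m) '' {ρ | IsProbDensity m ρ}

theorem convex_densityMoments {m : Measure X} {ι : Type*} {g : ι → X → ℝ}
    (hg : ∀ i, MemLp (g i) ⊤ m) : Convex ℝ (densityMoments m g) := by
  rintro _ ⟨ρ, hρ, rfl⟩ _ ⟨ρ', hρ', rfl⟩ a b ha hb hab
  refine ⟨a • ρ + b • ρ', hρ.convex_comb hρ' ha hb hab, funext fun i => ?_⟩
  have hint : ∀ ρ, IsProbDensity m ρ → Integrable (fun x => g i x * ρ x) m :=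
    fun ρ hρ => hρ.integrable.mul_of_top_right (hg i)
  simp only [Pi.add_apply, Pi.smul_apply, smul_eq_mul, mul_add, mul_left_comm (g i _)]
  rw [integral_add ((hint ρ hρ).const_mul a) ((hint ρ' hρ').const_mul b), integral_const_mul,
    integral_const_mul]

namespace PosFunctional

variable {m : Measure X} (μ : PosFunctional m)

theorem map_zero : μ.toFun 0 = 0 := by
  simpa using μ.map_smul' 0 0 MemLp.zero

theorem map_const (c : ℝ) : μ.toFun (fun _ => c) = c := by
  have hc : (c • fun _ : X => (1 : ℝ)) = fun _ => c := funext fun _ => mul_one c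
  rw [← hc, μ.map_smul' _ _ (memLp_top_const 1), μ.map_one', mul_one]

theorem map_mono {f g : X → ℝ} (hf : MemLp f ⊤ m) (hg : MemLp g ⊤ m) (h : f ≤ᵐ[m] g) :
    μ.toFun f ≤ μ.toFun g := by
  have hgf : 0 ≤ μ.toFun (g - f) :=
    μ.nonneg' _ (hg.sub hf) (h.mono fun x hx => sub_nonneg.2 hx)
  have hadd := μ.map_add' f (g - f) hf (hg.sub hf)
  rw [add_sub_cancel] at hadd
  linarith

theorem map_finset_sum {ι : Type*} (s : Finset ι) (f : ι → X → ℝ)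
    (hf : ∀ i ∈ s, MemLp (f i) ⊤ m) : μ.toFun (∑ i ∈ s, f i) = ∑ i ∈ s, μ.toFun (f i) := by
  induction s using Finset.cons_induction with
  | empty => simpa using μ.map_zero
  | cons a s ha ih =>
    rw [Finset.forall_mem_cons] at hf
    rw [Finset.sum_cons, Finset.sum_cons, μ.map_add' _ _ hf.1 (memLp_finsetSum' s hf.2),
      ih hf.2]

theorem measure_ne_zero (μ : PosFunctional m) : m ≠ 0 := by
  rintro rfl
  simpa [μ.map_one', μ.map_zero] using
    μ.congr_ae' (fun _ => 1) 0 (memLp_top_const 1) MemLp.zero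
      (by rw [ae_zero]; exact eventually_bot)

theorem sum_map_eq_one {D : Finset (X → ℝ)} (hD : IsPartUnity m D) :
    ∑ g ∈ D, μ.toFun g = 1 := by
  have hmem : ∀ g ∈ D, MemLp g ⊤ m := fun g hg => (hD.1 g hg).1
  refine (μ.map_finset_sum D id hmem).symm.trans ?_
  rw [← μ.map_const 1]
  refine μ.congr_ae' _ _ (memLp_finsetSum' D hmem) (memLp_top_const 1) ?_
  filter_upwards [hD.2] with x hx
  simpa using hx

theorem not_exists_lintegral_eq_zero_pos {D : Finset (X → ℝ)} (hD : IsPartUnity m D) :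
    ¬ ∃ g ∈ D, ∫⁻ x, ENNReal.ofReal (g x) ∂m = 0 ∧ 0 < μ.toFun g := by
  rintro ⟨g, hg, hnull, hpos⟩
  obtain ⟨hgm, hg0⟩ := hD.1 g hg
  rw [lintegral_eq_zero_iff' hgm.aestronglyMeasurable.aemeasurable.ennreal_ofReal] at hnull
  have hzero : g =ᵐ[m] 0 := by
    filter_upwards [hnull, hg0] with x hx hx0
    exact le_antisymm (ENNReal.ofReal_eq_zero.1 hx) hx0
  rw [μ.congr_ae' _ _ hgm MemLp.zero hzero, μ.map_zero] at hpos
  exact hpos.false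

theorem mem_closure_densityMoments [SigmaFinite m] {ι : Type*} [Fintype ι]
    {g : ι → X → ℝ} (hg : ∀ i, MemLp (g i) ⊤ m) :
    (fun i => μ.toFun (g i)) ∈ closure (densityMoments m g) := by
  by_contra hcon
  obtain ⟨L, u, hLu, huL⟩ :=
    geometric_hahn_banach_closed_point (convex_densityMoments hg).closure isClosed_closure hcon
  set c : ι → ℝ := fun i => L fun j => if i = j then 1 else 0
  have hL : ∀ v, L v = ∑ i, c i * v i := fun v => by
    simpa [mul_comm] using L.toLinearMap.pi_apply_eq_sum_univ v
  have hcg : ∀ i ∈ Finset.univ, MemLp (c i • g i) ⊤ m := fun i _ => (hg i).const_smul (c i)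
  set h : X → ℝ := ∑ i, c i • g i
  have hh : MemLp h ⊤ m := memLp_finsetSum' _ hcg
  have hlt : ∀ ρ, IsProbDensity m ρ → ∫ x, h x * ρ x ∂m < u := by
    intro ρ hρ
    have hint : ∀ i ∈ Finset.univ, Integrable (fun x => c i * (g i x * ρ x)) m :=
      fun i _ => (hρ.integrable.mul_of_top_right (hg i)).const_mul (c i)
    convert hLu _ (subset_closure ⟨ρ, hρ, rfl⟩) using 1
    simp only [hL, h, Finset.sum_apply, Pi.smul_apply, smul_eq_mul, Finset.sum_mul, mul_assoc]
    rw [integral_finsetSum _ hint]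
    simp only [integral_const_mul]
  have hle : μ.toFun h ≤ u := by
    simpa [μ.map_const] using
      μ.map_mono hh (memLp_top_const u) (ae_le_of_forall_isProbDensity hh hlt)
  have heq : μ.toFun h = L fun i => μ.toFun (g i) := by
    rw [hL, μ.map_finset_sum _ _ hcg]
    exact Finset.sum_congr rfl fun i _ => μ.map_smul' _ _ (hg i)
  linarith

theorem exists_isProbDensity_exp_neg_mul_lt [SigmaFinite m] {ι : Type*} [Fintype ι]
    {g : ι → X → ℝ} (hg : ∀ i, MemLp (g i) ⊤ m) {ε : ℝ} (hε : 0 < ε) :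
    ∃ ρ, IsProbDensity m ρ ∧
      ∀ i, 0 < μ.toFun (g i) → Real.exp (-ε) * μ.toFun (g i) < ∫ x, g i x * ρ x ∂m := by
  have hnhds : ∀ᶠ v in 𝓝 (fun i => μ.toFun (g i)),
      ∀ i, 0 < μ.toFun (g i) → Real.exp (-ε) * μ.toFun (g i) < v i := by
    refine eventually_all.2 fun i => ?_
    by_cases hi : 0 < μ.toFun (g i)
    · have hlt : Real.exp (-ε) * μ.toFun (g i) < μ.toFun (g i) :=
        mul_lt_of_lt_one_left hi (Real.exp_lt_one_iff.2 (neg_lt_zero.2 hε))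
      exact ((continuous_apply i).tendsto _).eventually_const_lt hlt |>.mono fun _ h _ => h
    · exact Eventually.of_forall fun _ h => absurd h hi
  obtain ⟨_, ⟨ρ, hρ, rfl⟩, hv⟩ :=
    (mem_closure_iff_frequently.1 (μ.mem_closure_densityMoments hg)).and_eventually hnhds
      |>.exists
  exact ⟨ρ, hρ, hv⟩

end PosFunctional

theorem neg_mul_le_tauTermR {m : Measure X} {α : X → X} {n : ℕ} {w ε : ℝ} {f g : X → ℝ}
    (hw : 0 ≤ w) (h : 0 < w → Real.exp (-ε) * w ≤ wInt m α n g f) :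
    ((-ε * w : ℝ) : EReal) ≤ tauTermR m α n w f g := by
  rcases hw.eq_or_lt with rfl | hw
  · simp [tauTermR]
  have hI : 0 < wInt m α n g f := (mul_pos (Real.exp_pos _) hw).trans_le (h hw)
  rw [tauTermR, if_neg hw.ne', if_neg hI.ne', EReal.coe_le_coe_iff, mul_comm]
  refine mul_le_mul_of_nonneg_left ?_ hw.le
  rw [Real.le_log_iff_exp_le (div_pos hI hw), le_div_iff₀ hw]
  exact h hw

theorem isPartUnity_singleton_one (m : Measure X) : IsPartUnity m {fun _ => 1} :=
  ⟨fun g hg => Finset.mem_singleton.1 hg ▸ ⟨memLp_top_const 1, .of_forall fun _ => zero_le_one⟩,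
    by simp⟩

section Bounds

variable {m : Measure X} [SigmaFinite m] {α : X → X}

theorem tauND_singleton_one (hm : MeasurePreserving α m m) (μ : PosFunctional m) (n : ℕ) :
    tauND m α μ n {fun _ => 1} = 0 := by
  have hterm : ∀ f ∈ UnitL1 m, tauTermR m α n (μ.toFun fun _ => 1) f (fun _ => 1) = 0 := by
    intro f hf
    have hI : wInt m α n (fun _ => 1) f = 1 := by
      simpa [wInt] using integral_abs_comp_of_mem_unitL1 (hm.iterate n) hf
    simp [tauTermR, μ.map_one', hI]
  obtain ⟨ρ, hρ, -⟩ := exists_isProbDensity_of_measure_pos MeasurableSet.univ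
    (Measure.measure_univ_pos.2 μ.measure_ne_zero)
  rw [tauND, tauNDW, if_neg (by simp [μ.measure_ne_zero])]
  simp only [Finset.sum_singleton]
  exact le_antisymm (iSup₂_le fun f hf => (hterm f hf).le)
    (le_iSup₂_of_le ρ hρ.mem_unitL1 (hterm ρ hρ.mem_unitL1).ge)

theorem zero_le_tauND {β : X → X} (hβ : Measurable β) (hβα : Function.LeftInverse β α)
    (hm : MeasurePreserving α m m) (μ : PosFunctional m) (n : ℕ) {D : Finset (X → ℝ)}
    (hD : IsPartUnity m D) : 0 ≤ tauND m α μ n D := by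
  rw [tauND, tauNDW, if_neg (μ.not_exists_lintegral_eq_zero_pos hD)]
  refine EReal.ge_of_forall_gt_iff_ge.1 fun z hz => ?_
  obtain ⟨ε, hε, rfl⟩ : ∃ ε : ℝ, 0 < ε ∧ z = -ε := ⟨-z, neg_pos.2 (mod_cast hz), (neg_neg z).symm⟩
  obtain ⟨ρ, hρ, hρg⟩ := μ.exists_isProbDensity_exp_neg_mul_lt
    (g := ((↑) : D → X → ℝ)) (fun g => (hD.1 g g.2).1) hε
  have hf : ρ ∘ β^[n] ∈ UnitL1 m := (hρ.comp ((hm.of_leftInverse hβ hβα).iterate n)).mem_unitL1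
  have hI : ∀ g, wInt m α n g (ρ ∘ β^[n]) = ∫ x, g x * ρ x ∂m := fun g => by
    simp [wInt, (hβα.iterate n) _, abs_of_nonneg (hρ.nonneg _)]
  refine le_iSup₂_of_le _ hf ?_
  calc ((-ε : ℝ) : EReal) = ((∑ g ∈ D, -ε * μ.toFun g : ℝ) : EReal) := by
        rw [← Finset.mul_sum, μ.sum_map_eq_one hD, mul_one]
    _ = ∑ g ∈ D, ((-ε * μ.toFun g : ℝ) : EReal) := EReal.coe_finset_sum _ _
    _ ≤ _ := Finset.sum_le_sum fun g hg =>
        neg_mul_le_tauTermR (μ.nonneg' g (hD.1 g hg).1 (hD.1 g hg).2)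
          fun hpos => (hI g).symm ▸ (hρg ⟨g, hg⟩ hpos).le

end Bounds

theorem tEntropy_eq_zero_of_invertible_general
    (m : Measure X) [SigmaFinite m] (α : X → X)
    (β : X → X) (hβ : Measurable β)
    (hβα : Function.LeftInverse β α)
    (hm : MeasurePreserving α m m) :
    ∀ μ : PosFunctional m, tEntropy m α μ = 0 := by
  intro μ
  have htauN : ∀ n, tauN m α μ n = 0 := fun n => le_antisymm
    ((iInf₂_le _ (isPartUnity_singleton_one m)).trans (tauND_singleton_one hm μ n).le)
    (le_iInf₂ fun D hD => zero_le_tauND hβ hβα hm μ n hD)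
  simp [tEntropy, htauN]

/-- If `α` is invertible with measurable inverse and the measure `m` is `α`-invariant,
then `τ(μ) = 0` for every `μ ∈ M(X,m)`. -/
theorem tEntropy_eq_zero_of_invertible
    (m : Measure X) [SigmaFinite m] (α : X → X) (hα : ShiftBounded m α)
    (β : X → X) (hβ : Measurable β)
    (hβα : Function.LeftInverse β α) (hαβ : Function.RightInverse β α)
    (hm : MeasurePreserving α m m) :
    ∀ μ : PosFunctional m, tEntropy m α μ = 0 :=
  tEntropy_eq_zero_of_invertible_general m α β hβ hβα hm

end TEntropyPaper
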